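/- arXiv:1602.08627 — 8 statements merged into one kernel-verified Lean document; each statement's English description precedes it below -/
import Mathlib

section
/- In a pointed category with finite limits, for a morphism i : I → Y the following are equivalent: (i) i is a monomorphism; (ii) i is the zero-class of a left split relation; (iii) i is the zero-class of a relation. -/
/-!
A zero-class of a relation is a pullback of the monomorphism `⟨d, c⟩`, hence a monomorphism.
Conversely, a monomorphism `i : I ⟶ Y` is the zero-class of the left split relation
`(0 : I ⟶ 0, i)`: since `⟨0, i⟩ = i ≫ ⟨0, 1⟩` with `⟨0, 1⟩` split by the projection, the square
with the identity of `I` on top is a pullback.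
-/

open CategoryTheory CategoryTheory.Limits

universe v u

variable {C : Type u} [Category.{v} C]

/-- `i : I ⟶ Y` is a zero-class of the span `(d : R ⟶ X, c : R ⟶ Y)`:
it fits in a pullback of `⟨d,c⟩` along `⟨0, 1_Y⟩`. -/
def IsZeroClass [HasZeroMorphisms C] [HasBinaryProducts C]
    {R X Y I : C} (d : R ⟶ X) (c : R ⟶ Y) (i : I ⟶ Y) : Prop :=
  ∃ l : I ⟶ R, IsPullback l i (prod.lift d c) (prod.lift (0 : Y ⟶ X) (𝟙 Y))

lemma mono_prod_lift_of_mono_right [HasBinaryProducts C] {W X Y : C} (f : W ⟶ X) (g : W ⟶ Y)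
    [Mono g] : Mono (prod.lift f g) :=
  mono_of_mono_fac (prod.lift_snd f g)

section

variable [HasZeroMorphisms C] [HasBinaryProducts C]

lemma IsZeroClass.mono {R X Y I : C} {d : R ⟶ X} {c : R ⟶ Y} {i : I ⟶ Y}
    (hz : IsZeroClass d c i) (hm : Mono (prod.lift d c)) : Mono i :=
  let ⟨_, h⟩ := hz
  h.mono_snd_of_mono

lemma isZeroClass_zero_of_mono {I Y : C} (X : C) (i : I ⟶ Y) [Mono i] :
    IsZeroClass (0 : I ⟶ X) i i :=
  have : Mono (prod.lift (0 : Y ⟶ X) (𝟙 Y)) := mono_prod_lift_of_mono_right _ _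
  ⟨𝟙 I, IsPullback.of_horiz_isIso_mono ⟨by ext <;> simp⟩⟩

end

/-- In a pointed category with finite limits, for a morphism `i : I ⟶ Y` the following are
equivalent: (i) `i` is a monomorphism; (ii) `i` is the zero-class of a left split relation;
(iii) `i` is the zero-class of a relation. -/
theorem mono_iff_zeroClass {C : Type u} [Category.{v} C]
    [HasZeroObject C] [HasZeroMorphisms C] [HasFiniteLimits C]
    {I Y : C} (i : I ⟶ Y) :
    (Mono i ↔
      ∃ (X R : C) (d : R ⟶ X) (c : R ⟶ Y) (e : X ⟶ R),
        Mono (prod.lift d c) ∧ e ≫ d = 𝟙 X ∧ IsZeroClass d c i) ∧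
    (Mono i ↔
      ∃ (X R : C) (d : R ⟶ X) (c : R ⟶ Y),
        Mono (prod.lift d c) ∧ IsZeroClass d c i) := by
  have left_split_of_mono : Mono i → ∃ (X R : C) (d : R ⟶ X) (c : R ⟶ Y) (e : X ⟶ R),
      Mono (prod.lift d c) ∧ e ≫ d = 𝟙 X ∧ IsZeroClass d c i := fun _ => open ZeroObject in
    ⟨0, I, 0, i, 0, mono_prod_lift_of_mono_right _ _, (isZero_zero C).eq_of_src _ _,
      isZeroClass_zero_of_mono _ i⟩
  refine ⟨⟨left_split_of_mono, fun ⟨_, _, _, _, _, hm, _, hz⟩ => hz.mono hm⟩,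
    ⟨fun hi => ?_, fun ⟨_, _, _, _, hm, hz⟩ => hz.mono hm⟩⟩
  obtain ⟨X, R, d, c, _, hm, _, hz⟩ := left_split_of_mono hi
  exact ⟨X, R, d, c, hm, hz⟩
end

section
/- In a pointed category with finite limits, clots are stable under pullback: if k : K → X is a clot and f : Y → X is any morphism, then the pullback k' : K' → Y of k along f is a clot. -/
open CategoryTheory CategoryTheory.Limits

universe v u

variable {C : Type u} [Category.{v} C]

/-- `k : K ⟶ X` is a clot: a monomorphism which is the zero-class of a reflexive
relation on `X`. -/
def IsClot [HasZeroMorphisms C] [HasBinaryProducts C] {K X : C} (k : K ⟶ X) : Prop :=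
  Mono k ∧ ∃ (R : C) (d c : R ⟶ X) (e : X ⟶ R),
    Mono (prod.lift d c) ∧ e ≫ d = 𝟙 X ∧ e ≫ c = 𝟙 X ∧ IsZeroClass d c k

/-!
Pull the relation `⟨d, c⟩ : R ⟶ X ⨯ X` back along `f ⨯ f` to get `⟨d', c'⟩ : R' ⟶ Y ⨯ Y`. It is
again a relation (a pullback of a mono), reflexive (the diagonal of `Y` lifts through `f ≫ e`), and
its zero-class is the pullback of `k` along `f`, because `⟨0, 1⟩ ≫ (f ⨯ f) = f ≫ ⟨0, 1⟩`, so the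
two pullback squares paste.
-/

section

variable [HasBinaryProducts C]

lemma exists_isPullback_prodLift [HasPullbacks C] {R X' Z' W : C} (m : R ⟶ W) (u : X' ⨯ Z' ⟶ W) :
    ∃ (R' : C) (p : R' ⟶ R) (d' : R' ⟶ X') (c' : R' ⟶ Z'), IsPullback p (prod.lift d' c') m u :=
  ⟨pullback m u, pullback.fst m u, pullback.snd m u ≫ prod.fst, pullback.snd m u ≫ prod.snd, by
    simpa [← prod.comp_lift] using IsPullback.of_hasPullback m u⟩

lemma exists_refl_of_isPullback_prodMap {R X Y R' : C} {d c : R ⟶ X} {e : X ⟶ R}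
    (hed : e ≫ d = 𝟙 X) (hec : e ≫ c = 𝟙 X) {f : Y ⟶ X} {p : R' ⟶ R} {d' c' : R' ⟶ Y}
    (hR : IsPullback p (prod.lift d' c') (prod.lift d c) (prod.map f f)) :
    ∃ e' : Y ⟶ R', e' ≫ d' = 𝟙 Y ∧ e' ≫ c' = 𝟙 Y := by
  have hw : (f ≫ e) ≫ prod.lift d c = prod.lift (𝟙 Y) (𝟙 Y) ≫ prod.map f f := by
    ext <;> simp [hed, hec]
  have hlift := hR.lift_snd (f ≫ e) (prod.lift (𝟙 Y) (𝟙 Y)) hw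
  refine ⟨hR.lift (f ≫ e) (prod.lift (𝟙 Y) (𝟙 Y)) hw, ?_, ?_⟩
  · simpa only [Category.assoc, prod.lift_fst] using hlift =≫ prod.fst
  · simpa only [Category.assoc, prod.lift_snd] using hlift =≫ prod.snd

variable [HasZeroMorphisms C]

lemma prodLift_zero_id_comp_prodMap {X X' Z Z' : C} (fX : X' ⟶ X) (fZ : Z' ⟶ Z) :
    prod.lift (0 : Z' ⟶ X') (𝟙 Z') ≫ prod.map fX fZ = fZ ≫ prod.lift (0 : Z ⟶ X) (𝟙 Z) := by
  ext <;> simp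

lemma IsZeroClass.of_isPullback {R X Z K R' X' Z' K' : C} {d : R ⟶ X} {c : R ⟶ Z} {k : K ⟶ Z}
    (hk : IsZeroClass d c k) {fX : X' ⟶ X} {fZ : Z' ⟶ Z} {p : R' ⟶ R} {d' : R' ⟶ X'}
    {c' : R' ⟶ Z'} (hR : IsPullback p (prod.lift d' c') (prod.lift d c) (prod.map fX fZ))
    {g : K' ⟶ K} {k' : K' ⟶ Z'} (hK : IsPullback g k' k fZ) : IsZeroClass d' c' k' := by
  obtain ⟨l, hl⟩ := hk
  have hpasted : IsPullback (g ≫ l) k' (prod.lift d c)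
      (prod.lift (0 : Z' ⟶ X') (𝟙 Z') ≫ prod.map fX fZ) := by
    rw [prodLift_zero_id_comp_prodMap]
    exact hK.paste_horiz hl
  exact ⟨_, hpasted.of_right' hR⟩

end

theorem isClot_of_isPullback_general {C : Type u} [Category.{v} C]
    [HasZeroMorphisms C] [HasFiniteLimits C]
    {K X Y K' : C} (k : K ⟶ X) (f : Y ⟶ X) (g : K' ⟶ K) (k' : K' ⟶ Y)
    (h : IsPullback g k' k f) (hk : IsClot k) :
    IsClot k' := by
  obtain ⟨hmono, R, d, c, e, hrel, hed, hec, hzero⟩ := hk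
  obtain ⟨R', p, d', c', hR⟩ := exists_isPullback_prodLift (prod.lift d c) (prod.map f f)
  obtain ⟨e', hed', hec'⟩ := exists_refl_of_isPullback_prodMap hed hec hR
  exact ⟨h.mono_snd_of_mono hmono, R', d', c', e', hR.mono_snd_of_mono hrel, hed', hec',
    hzero.of_isPullback hR h⟩

/-- In a pointed category with finite limits, clots are stable under pullback: if
`k : K ⟶ X` is a clot and `f : Y ⟶ X` is any morphism, then the pullback
`k' : K' ⟶ Y` of `k` along `f` is a clot. -/
theorem isClot_of_isPullback {C : Type u} [Category.{v} C]
    [HasZeroObject C] [HasZeroMorphisms C] [HasFiniteLimits C]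
    {K X Y K' : C} (k : K ⟶ X) (f : Y ⟶ X) (g : K' ⟶ K) (k' : K' ⟶ Y)
    (h : IsPullback g k' k f) (hk : IsClot k) :
    IsClot k' :=
  isClot_of_isPullback_general k f g k' h hk
end

section
/- In a pointed category with finite limits, an intersection of two clots is a clot: if k : K → X and l : L → X are clots, then the subobject K∩L → X obtained as the pullback of k and l is a clot. -/
open CategoryTheory CategoryTheory.Limits

universe v u

variable {C : Type u} [Category.{v} C]

/-
Regard a relation `(d, c)` on `X` as a subobject `⟨d, c⟩ : R ⟶ X ⨯ X`; its zero-class is the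
pullback of this subobject along `⟨0, 1⟩ : X ⟶ X ⨯ X`. Pulling back along a fixed morphism
preserves intersections of subobjects, so the zero-class of the intersection `R₁ ∩ R₂` of two
relations is the intersection of their zero-classes. If both relations are reflexive, so is
`R₁ ∩ R₂`, the diagonal factoring through both.
-/

namespace CategoryTheory.IsPullback

theorem exists_isPullback_of_inter {Y X R₁ R₂ R K L P : C}
    {r₁ : R₁ ⟶ Y} {r₂ : R₂ ⟶ Y} {p₁ : R ⟶ R₁} {p₂ : R ⟶ R₂} (hR : IsPullback p₁ p₂ r₁ r₂)
    {f : X ⟶ Y} {k : K ⟶ X} {l : L ⟶ X} {g₁ : K ⟶ R₁} {g₂ : L ⟶ R₂}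
    (hK : IsPullback g₁ k r₁ f) (hL : IsPullback g₂ l r₂ f)
    {a : P ⟶ K} {b : P ⟶ L} (h : IsPullback a b k l) :
    ∃ m : P ⟶ R, IsPullback m (a ≫ k) (p₁ ≫ r₁) f := by
  -- `P` is the pullback of `r₂` along `g₁ ≫ r₁ = k ≫ f`; cancel `hR` on the right, paste `hK` below.
  have hPR₂ : IsPullback (b ≫ g₂) a r₂ (g₁ ≫ r₁) := hK.w ▸ h.flip.paste_horiz hL
  exact ⟨_, (hPR₂.of_right' hR.flip).paste_vert hK⟩

end CategoryTheory.IsPullback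

theorem IsZeroClass.inter [HasZeroMorphisms C] [HasBinaryProducts C] {R₁ R₂ R X Y I J P : C}
    {d₁ : R₁ ⟶ X} {c₁ : R₁ ⟶ Y} {d₂ : R₂ ⟶ X} {c₂ : R₂ ⟶ Y} {p₁ : R ⟶ R₁} {p₂ : R ⟶ R₂}
    (hR : IsPullback p₁ p₂ (prod.lift d₁ c₁) (prod.lift d₂ c₂))
    {i : I ⟶ Y} {j : J ⟶ Y} (hi : IsZeroClass d₁ c₁ i) (hj : IsZeroClass d₂ c₂ j)
    {a : P ⟶ I} {b : P ⟶ J} (h : IsPullback a b i j) :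
    IsZeroClass (p₁ ≫ d₁) (p₁ ≫ c₁) (a ≫ i) := by
  obtain ⟨g₁, hi⟩ := hi
  obtain ⟨g₂, hj⟩ := hj
  rw [IsZeroClass, ← prod.comp_lift]
  exact hR.exists_isPullback_of_inter hi hj h

theorem isClot_intersection_general {C : Type u} [Category.{v} C]
    [HasZeroMorphisms C] [HasFiniteLimits C]
    {K L X P : C} (k : K ⟶ X) (l : L ⟶ X) (a : P ⟶ K) (b : P ⟶ L)
    (h : IsPullback a b k l) (hk : IsClot k) (hl : IsClot l) :
    IsClot (a ≫ k) := by
  obtain ⟨hk_mono, R₁, d₁, c₁, e₁, hr₁_mono, he₁d, he₁c, hk_zero⟩ := hk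
  obtain ⟨hl_mono, R₂, d₂, c₂, e₂, hr₂_mono, he₂d, he₂c, hl_zero⟩ := hl
  have hR := IsPullback.of_hasPullback (prod.lift d₁ c₁) (prod.lift d₂ c₂)
  have he : e₁ ≫ prod.lift d₁ c₁ = e₂ ≫ prod.lift d₂ c₂ := by
    simp only [prod.comp_lift, he₁d, he₁c, he₂d, he₂c]
  have : Mono a := h.mono_fst_of_mono
  refine ⟨mono_comp a k, pullback (prod.lift d₁ c₁) (prod.lift d₂ c₂),
    pullback.fst _ _ ≫ d₁, pullback.fst _ _ ≫ c₁, pullback.lift e₁ e₂ he, ?_, ?_, ?_,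
    hk_zero.inter hR hl_zero h⟩
  · rw [← prod.comp_lift]
    exact mono_comp _ _
  · rw [pullback.lift_fst_assoc, he₁d]
  · rw [pullback.lift_fst_assoc, he₁c]

/-- In a pointed category with finite limits, an intersection of two clots is a clot:
if `k : K ⟶ X` and `l : L ⟶ X` are clots, then the subobject `K ∩ L → X`, obtained as
(the diagonal of) the pullback of `k` and `l`, is a clot. -/
theorem isClot_intersection {C : Type u} [Category.{v} C]
    [HasZeroObject C] [HasZeroMorphisms C] [HasFiniteLimits C]
    {K L X P : C} (k : K ⟶ X) (l : L ⟶ X) (a : P ⟶ K) (b : P ⟶ L)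
    (h : IsPullback a b k l) (hk : IsClot k) (hl : IsClot l) :
    IsClot (a ≫ k) :=
  isClot_intersection_general k l a b h hk hl
end

section
/- In a pointed regular category, every kernel (a morphism that is a kernel of some morphism) is a clot, and every clot is an ideal. -/
open CategoryTheory CategoryTheory.Limits

universe v u

variable {C : Type u} [Category.{v} C]

/-- `i : I ⟶ Y` is an ideal: a monomorphism which is the regular image of a clot,
i.e. there are a clot `k : K ⟶ X` and regular epimorphisms `p : X ⟶ Y`, `q : K ⟶ I`
with `i ∘ q = p ∘ k`. -/
def IsIdeal [HasZeroMorphisms C] [HasBinaryProducts C] {I Y : C} (i : I ⟶ Y) : Prop :=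
  Mono i ∧ ∃ (K X : C) (k : K ⟶ X) (p : X ⟶ Y) (q : K ⟶ I),
    IsClot k ∧ Nonempty (RegularEpi p) ∧ Nonempty (RegularEpi q) ∧ q ≫ i = k ≫ p

/-- A regular category: finitely complete, with coequalizers of kernel pairs,
and regular epimorphisms stable under pullback. -/
class RegularCategory (C : Type u) [Category.{v} C] extends HasFiniteLimits C : Prop where
  hasCoequalizerOfKernelPair : ∀ {X Y : C} (f : X ⟶ Y),
    HasCoequalizer (pullback.fst f f) (pullback.snd f f)
  regularEpiStable : ∀ {P X Y Z : C} (f : X ⟶ Z) (g : Y ⟶ Z) (fst : P ⟶ X) (snd : P ⟶ Y),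
    IsPullback fst snd f g → Nonempty (RegularEpi f) → Nonempty (RegularEpi snd)

/-!
The kernel pair `(pullback.fst f f, pullback.snd f f)` of `f` is a reflexive relation, split by
the diagonal, and a generalised element `b` lies in its zero-class exactly when `(0, b)` is in the
kernel pair, i.e. when `b ≫ f = 0`. So a kernel of `f` is the zero-class of the kernel pair of `f`.
A clot is an ideal as the regular image of itself along identities.
-/

theorem mono_prod_lift_pullback_fst_snd [HasBinaryProducts C] {X Y Z : C} (f : X ⟶ Z) (g : Y ⟶ Z)
    [HasPullback f g] :
    Mono (prod.lift (pullback.fst f g) (pullback.snd f g)) :=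
  ⟨fun a b h => pullback.hom_ext (by simpa only [Category.assoc, prod.lift_fst] using h =≫ prod.fst)
    (by simpa only [Category.assoc, prod.lift_snd] using h =≫ prod.snd)⟩

section

variable [HasZeroMorphisms C] [HasBinaryProducts C]

theorem comp_prod_lift_eq_comp_prod_lift_zero_id_iff {T R X Y : C} (a : T ⟶ R) (b : T ⟶ Y)
    (d : R ⟶ X) (c : R ⟶ Y) :
    a ≫ prod.lift d c = b ≫ prod.lift (0 : Y ⟶ X) (𝟙 Y) ↔ a ≫ d = 0 ∧ a ≫ c = b := by
  constructor
  · intro h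
    exact ⟨by simpa only [Category.assoc, prod.lift_fst, comp_zero] using h =≫ prod.fst,
      by simpa only [Category.assoc, prod.lift_snd, Category.comp_id] using h =≫ prod.snd⟩
  · rintro ⟨hd, hc⟩
    ext
    · rw [Category.assoc, Category.assoc, prod.lift_fst, prod.lift_fst, hd, comp_zero]
    · rw [Category.assoc, Category.assoc, prod.lift_snd, prod.lift_snd, hc, Category.comp_id]

theorem isZeroClass_kernelPair_of_isKernel {K X X' : C} (k : K ⟶ X) (f : X ⟶ X')
    [HasPullback f f] (w : k ≫ f = 0) (hk : IsLimit (KernelFork.ofι k w)) :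
    IsZeroClass (pullback.fst f f) (pullback.snd f f) k := by
  have comm : CommSq (pullback.lift 0 k (by simp [w])) k
      (prod.lift (pullback.fst f f) (pullback.snd f f)) (prod.lift (0 : X ⟶ X) (𝟙 X)) :=
    ⟨(comp_prod_lift_eq_comp_prod_lift_zero_id_iff _ _ _ _).2
      ⟨pullback.lift_fst _ _ _, pullback.lift_snd _ _ _⟩⟩
  have snd_comp_eq_zero : ∀ s : PullbackCone (prod.lift (pullback.fst f f) (pullback.snd f f))
      (prod.lift (0 : X ⟶ X) (𝟙 X)), s.snd ≫ f = 0 := by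
    intro s
    obtain ⟨hfst, hsnd⟩ := (comp_prod_lift_eq_comp_prod_lift_zero_id_iff _ _ _ _).1 s.condition
    rw [← hsnd, Category.assoc, ← pullback.condition, ← Category.assoc, hfst, zero_comp]
  let lift s := KernelFork.IsLimit.lift' hk _ (snd_comp_eq_zero s)
  refine ⟨_, IsPullback.of_isLimit' comm
    (PullbackCone.IsLimit.mk comm.w (fun s => (lift s).1) (fun s => ?_) (fun s => (lift s).2)
      (fun s m _ hm => Fork.IsLimit.hom_ext hk (hm.trans (lift s).2.symm)))⟩
  obtain ⟨hfst, hsnd⟩ := (comp_prod_lift_eq_comp_prod_lift_zero_id_iff _ _ _ _).1 s.condition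
  apply pullback.hom_ext
  · rw [Category.assoc, pullback.lift_fst, comp_zero, hfst]
  · rw [Category.assoc, pullback.lift_snd, hsnd]
    exact (lift s).2

theorem isClot_of_isKernel [HasPullbacks C] {K X X' : C} (k : K ⟶ X) (f : X ⟶ X')
    (w : k ≫ f = 0) (hk : IsLimit (KernelFork.ofι k w)) : IsClot k :=
  ⟨mono_of_isLimit_fork hk, pullback f f, pullback.fst f f, pullback.snd f f, pullback.diagonal f,
    mono_prod_lift_pullback_fst_snd f f, pullback.diagonal_fst f, pullback.diagonal_snd f,
    isZeroClass_kernelPair_of_isKernel k f w hk⟩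

theorem isIdeal_of_isClot {K X : C} (k : K ⟶ X) (hk : IsClot k) : IsIdeal k :=
  ⟨hk.1, K, X, k, 𝟙 X, 𝟙 K, hk, ⟨RegularEpi.ofIso (Iso.refl _)⟩,
    ⟨RegularEpi.ofIso (Iso.refl _)⟩, by simp⟩

end

theorem kernel_isClot_and_clot_isIdeal_general {C : Type u} [Category.{v} C]
    [HasZeroMorphisms C] [RegularCategory C] :
    (∀ (K X X' : C) (k : K ⟶ X) (f : X ⟶ X') (w : k ≫ f = 0),
      IsLimit (KernelFork.ofι k w) → IsClot k) ∧
    (∀ (K X : C) (k : K ⟶ X), IsClot k → IsIdeal k) :=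
  ⟨fun _ _ _ k f w hk => isClot_of_isKernel k f w hk, fun _ _ k hk => isIdeal_of_isClot k hk⟩

/-- In a pointed regular category, every kernel is a clot and every clot is an ideal. -/
theorem kernel_isClot_and_clot_isIdeal {C : Type u} [Category.{v} C]
    [HasZeroObject C] [HasZeroMorphisms C] [RegularCategory C] :
    (∀ (K X X' : C) (k : K ⟶ X) (f : X ⟶ X') (w : k ≫ f = 0),
      IsLimit (KernelFork.ofι k w) → IsClot k) ∧
    (∀ (K X : C) (k : K ⟶ X), IsClot k → IsIdeal k) :=
  kernel_isClot_and_clot_isIdeal_general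
end

section
/- In a pointed regular category, every ideal is the regular image of a kernel along a regular epimorphism: for every ideal i : I → Y there exist an object R, a morphism l : M → R which is a kernel of some morphism, a regular epimorphism t : R → Y, and a regular epimorphism q : M → I such that i∘q = t∘l. -/
open CategoryTheory CategoryTheory.Limits

universe v u

variable {C : Type u} [Category.{v} C]

/-!
If `k` is the zero-class of a reflexive relation `(d, c)` on `X`, then `k = c ∘ l` with `l` a
kernel of `d`. Since `c` is split by the reflexivity map, `c` followed by the regular epi
`p : X ⟶ Y` is again a regular epi, so `i ∘ q = p ∘ k = (p ∘ c) ∘ l` exhibits `i` as required.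
-/

lemma isRegularEpi_comp_of_isSplitEpi {X Y B : C} (g : Y ⟶ X) [IsSplitEpi g] (f : X ⟶ B)
    [IsRegularEpi f] [HasPullback (g ≫ f) (g ≫ f)] : IsRegularEpi (g ≫ f) :=
  (isRegularEpi_iff_effectiveEpi _).2 inferInstance

section ZeroClass

variable [HasZeroMorphisms C] [HasBinaryProducts C] {R X Y I : C} {d : R ⟶ X} {c : R ⟶ Y}
  {i : I ⟶ Y} {l : I ⟶ R}

lemma comp_eq_zero_of_isZeroClassPullback
    (h : IsPullback l i (prod.lift d c) (prod.lift (0 : Y ⟶ X) (𝟙 Y))) : l ≫ d = 0 := by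
  simpa [-prod.comp_lift, prod.lift_fst] using h.w =≫ prod.fst

lemma comp_eq_of_isZeroClassPullback
    (h : IsPullback l i (prod.lift d c) (prod.lift (0 : Y ⟶ X) (𝟙 Y))) : l ≫ c = i := by
  simpa only [Category.assoc, prod.lift_snd, Category.comp_id] using h.w =≫ prod.snd

/-- Pulling back `⟨d, c⟩` along `⟨0, 1⟩` computes the kernel of `d`: a map `g` killed by `d`
factors as `⟨d, c⟩ ∘ g = ⟨0, 1⟩ ∘ (c ∘ g)`. -/
noncomputable def isLimitKernelForkOfIsZeroClassPullback
    (h : IsPullback l i (prod.lift d c) (prod.lift (0 : Y ⟶ X) (𝟙 Y))) :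
    IsLimit (KernelFork.ofι l (comp_eq_zero_of_isZeroClassPullback h)) :=
  KernelFork.IsLimit.ofι _ _
    (fun g hg => h.lift g (g ≫ c) (by ext <;> simp [hg]))
    (fun _ _ => h.lift_fst _ _ _)
    (fun g _ m hm => h.hom_ext (by simpa using hm)
      (by rw [h.lift_snd, ← hm, Category.assoc, comp_eq_of_isZeroClassPullback h]))

lemma IsZeroClass.exists_kernel (h : IsZeroClass d c i) :
    ∃ (l : I ⟶ R) (w : l ≫ d = 0), l ≫ c = i ∧ Nonempty (IsLimit (KernelFork.ofι l w)) :=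
  let ⟨l, hl⟩ := h
  ⟨l, comp_eq_zero_of_isZeroClassPullback hl, comp_eq_of_isZeroClassPullback hl,
    ⟨isLimitKernelForkOfIsZeroClassPullback hl⟩⟩

end ZeroClass

theorem ideal_is_regular_image_of_kernel_general {C : Type u} [Category.{v} C]
    [HasZeroMorphisms C] [RegularCategory C]
    {I Y : C} (i : I ⟶ Y) (hi : IsIdeal i) :
    ∃ (R M : C) (l : M ⟶ R) (t : R ⟶ Y) (q : M ⟶ I),
      (∃ (Z : C) (f : R ⟶ Z) (w : l ≫ f = 0), Nonempty (IsLimit (KernelFork.ofι l w))) ∧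
      Nonempty (RegularEpi t) ∧ Nonempty (RegularEpi q) ∧ q ≫ i = l ≫ t := by
  obtain ⟨-, K, X, k, p, q, ⟨-, R, d, c, e, -, -, hec, hk⟩, ⟨hp⟩, hq, hqi⟩ := hi
  obtain ⟨l, hld, hlc, hker⟩ := hk.exists_kernel
  have : IsSplitEpi c := IsSplitEpi.mk' ⟨e, hec⟩
  have : IsRegularEpi p := isRegularEpi_of_regularEpi hp
  refine ⟨R, K, l, c ≫ p, q, ⟨X, d, hld, hker⟩, ?_, hq, ?_⟩
  · exact (isRegularEpi_comp_of_isSplitEpi c p).regularEpi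
  · rw [hqi, ← hlc, Category.assoc]

/-- In a pointed regular category, every ideal is the regular image of a kernel along a
regular epimorphism: for every ideal `i : I ⟶ Y` there are an object `R`, a morphism
`l : M ⟶ R` which is a kernel of some morphism, and regular epimorphisms `t : R ⟶ Y` and
`q : M ⟶ I` such that `i ∘ q = t ∘ l`. -/
theorem ideal_is_regular_image_of_kernel {C : Type u} [Category.{v} C]
    [HasZeroObject C] [HasZeroMorphisms C] [RegularCategory C]
    {I Y : C} (i : I ⟶ Y) (hi : IsIdeal i) :
    ∃ (R M : C) (l : M ⟶ R) (t : R ⟶ Y) (q : M ⟶ I),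
      (∃ (Z : C) (f : R ⟶ Z) (w : l ≫ f = 0), Nonempty (IsLimit (KernelFork.ofι l w))) ∧
      Nonempty (RegularEpi t) ∧ Nonempty (RegularEpi q) ∧ q ≫ i = l ≫ t :=
  ideal_is_regular_image_of_kernel_general i hi
end

section
/- In a pointed regular category, ideals are stable under composition with product inclusions: if i : I → Y is an ideal and W is any object, then ⟨i,0⟩ : I → Y×W (the composite of i with the product inclusion ⟨1_Y,0⟩ : Y → Y×W) is an ideal. -/
open CategoryTheory CategoryTheory.Limits

universe v u

variable {C : Type u} [Category.{v} C]

/-!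
If `i` is the regular image of a clot `k : K ⟶ X` along `p : X ⟶ Y` and `q : K ⟶ I`, then
`⟨i, 0⟩` is the regular image of `⟨k, 0⟩ : K ⟶ X ⨯ W` along `p × 1_W` and `q`. Indeed, if `k` is
the zero-class of the reflexive relation `(d, c)` on `X`, then `⟨k, 0⟩` is the zero-class of the
reflexive relation `(d × 1_W, c × 1_W)` on `X ⨯ W`; and `p × 1_W` is a regular epimorphism, being
the pullback of `p` along the projection `Y ⨯ W ⟶ Y`.
-/

attribute [local simp] prod.lift_fst prod.lift_snd prod.lift_fst_assoc prod.lift_snd_assoc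

theorem isPullback_fst_prod_map_id [HasBinaryProducts C] [HasPullbacks C] {X Y : C}
    (p : X ⟶ Y) (W : C) :
    IsPullback (prod.fst : X ⨯ W ⟶ X) (prod.map p (𝟙 W)) p prod.fst :=
  IsPullback.of_iso_pullback ⟨(prod.map_fst p (𝟙 W)).symm⟩ (pullbackProdFstIsoProd p W).symm
    (by simp) (pullback.lift_snd _ _ _)

theorem RegularCategory.regularEpi_prod_map_id [RegularCategory C] {X Y : C} {p : X ⟶ Y}
    (hp : Nonempty (RegularEpi p)) (W : C) : Nonempty (RegularEpi (prod.map p (𝟙 W))) :=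
  regularEpiStable p prod.fst prod.fst _ (isPullback_fst_prod_map_id p W) hp

theorem mono_lift_prod_map [HasBinaryProducts C] {R X S Y : C} (d c : R ⟶ X) (d' c' : S ⟶ Y)
    [Mono (prod.lift d c)] [Mono (prod.lift d' c')] :
    Mono (prod.lift (prod.map d d') (prod.map c c')) := by
  refine ⟨fun u v h => ?_⟩
  ext
  · rw [← cancel_mono (prod.lift d c)]
    ext
    · simpa using h =≫ prod.fst ≫ prod.fst
    · simpa using h =≫ prod.snd ≫ prod.fst
  · rw [← cancel_mono (prod.lift d' c')]
    ext
    · simpa using h =≫ prod.fst ≫ prod.snd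
    · simpa using h =≫ prod.snd ≫ prod.snd

section ProdMapId

variable [HasZeroMorphisms C] [HasBinaryProducts C] {R X : C} (d c : R ⟶ X) (W : C)

theorem comp_lift_prod_map_id_eq_iff {T : C} (a : T ⟶ R ⨯ W) (b : T ⟶ X ⨯ W) :
    a ≫ prod.lift (prod.map d (𝟙 W)) (prod.map c (𝟙 W)) = b ≫ prod.lift 0 (𝟙 _) ↔
      (a ≫ prod.fst) ≫ prod.lift d c = (b ≫ prod.fst) ≫ prod.lift 0 (𝟙 X) ∧
        a ≫ prod.snd = 0 ∧ b ≫ prod.snd = 0 := by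
  simp only [prod.hom_ext_iff, Category.assoc, prod.lift_fst, prod.lift_snd, prod.map_fst,
    prod.map_snd, comp_zero, Category.comp_id, zero_comp]
  constructor
  · rintro ⟨⟨hd, ha⟩, hc, hb⟩
    exact ⟨⟨hd, hc⟩, ha, hb ▸ ha⟩
  · rintro ⟨⟨hd, hc⟩, ha, hb⟩
    exact ⟨⟨hd, ha⟩, hc, ha.trans hb.symm⟩

variable {d c} in
theorem IsZeroClass.prod_map_id {K : C} {k : K ⟶ X} (h : IsZeroClass d c k) :
    IsZeroClass (prod.map d (𝟙 W)) (prod.map c (𝟙 W)) (prod.lift k (0 : K ⟶ W)) := by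
  obtain ⟨l, hpb⟩ := h
  have hs (s : PullbackCone (prod.lift (prod.map d (𝟙 W)) (prod.map c (𝟙 W)))
      (prod.lift 0 (𝟙 _))) :=
    (comp_lift_prod_map_id_eq_iff d c W s.fst s.snd).1 s.condition
  have hw := (comp_lift_prod_map_id_eq_iff d c W (prod.lift l 0) (prod.lift k 0)).2
    ⟨by simpa using hpb.w, by simp, by simp⟩
  refine ⟨prod.lift l 0, .of_isLimit' ⟨hw⟩ (PullbackCone.IsLimit.mk _
    (fun s => hpb.lift _ _ (hs s).1) (fun s => ?_) (fun s => ?_) (fun s m hl hk => ?_))⟩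
  · ext
    · simp
    · simp [(hs s).2.1]
  · ext
    · simp
    · simp [(hs s).2.2]
  · apply hpb.hom_ext
    · simpa using hl =≫ prod.fst
    · simpa using hk =≫ prod.fst

theorem IsClot.prod_lift_zero {K : C} {k : K ⟶ X} (hk : IsClot k) :
    IsClot (prod.lift k (0 : K ⟶ W)) := by
  obtain ⟨_, R, d, c, e, _, hed, hec, hz⟩ := hk
  refine ⟨inferInstance, R ⨯ W, prod.map d (𝟙 W), prod.map c (𝟙 W), prod.map e (𝟙 W),
    mono_lift_prod_map d c (𝟙 W) (𝟙 W), ?_, ?_, hz.prod_map_id W⟩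
  · rw [prod.map_map, hed, Category.comp_id, prod.map_id_id]
  · rw [prod.map_map, hec, Category.comp_id, prod.map_id_id]

end ProdMapId

theorem IsIdeal.prod_lift_zero [HasZeroMorphisms C] [RegularCategory C] {I Y : C} {i : I ⟶ Y}
    (hi : IsIdeal i) (W : C) : IsIdeal (prod.lift i (0 : I ⟶ W)) := by
  obtain ⟨_, K, X, k, p, q, hk, hp, hq, hqi⟩ := hi
  refine ⟨inferInstance, K, X ⨯ W, prod.lift k 0, prod.map p (𝟙 W), q, hk.prod_lift_zero W,
    RegularCategory.regularEpi_prod_map_id hp W, hq, ?_⟩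
  ext <;> simp [hqi]

theorem isIdeal_comp_product_inclusion_general {C : Type u} [Category.{v} C]
    [HasZeroMorphisms C] [RegularCategory C]
    {I Y : C} (i : I ⟶ Y) (W : C) (hi : IsIdeal i) :
    i ≫ prod.lift (𝟙 Y) (0 : Y ⟶ W) = prod.lift i (0 : I ⟶ W) ∧
    IsIdeal (i ≫ prod.lift (𝟙 Y) (0 : Y ⟶ W)) := by
  have h : i ≫ prod.lift (𝟙 Y) (0 : Y ⟶ W) = prod.lift i 0 := by ext <;> simp
  exact ⟨h, h ▸ hi.prod_lift_zero W⟩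

/-- In a pointed regular category, ideals are stable under composition with product
inclusions: if `i : I ⟶ Y` is an ideal and `W` is any object, then
`⟨i,0⟩ : I ⟶ Y ⨯ W`, the composite of `i` with the product inclusion
`⟨1_Y,0⟩ : Y ⟶ Y ⨯ W`, is an ideal. -/
theorem isIdeal_comp_product_inclusion {C : Type u} [Category.{v} C]
    [HasZeroObject C] [HasZeroMorphisms C] [RegularCategory C]
    {I Y : C} (i : I ⟶ Y) (W : C) (hi : IsIdeal i) :
    i ≫ prod.lift (𝟙 Y) (0 : Y ⟶ W) = prod.lift i (0 : I ⟶ W) ∧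
    IsIdeal (i ≫ prod.lift (𝟙 Y) (0 : Y ⟶ W)) :=
  isIdeal_comp_product_inclusion_general i W hi
end

section
/- In a pointed regular category, an intersection of an ideal and a clot is an ideal: if i : I → Y is an ideal and l : L → Y is a clot, then the subobject I∩L → Y obtained as the pullback of i and l is an ideal. -/
/-!
Present the ideal `i` as the regular image of a clot `k : K ⟶ X` along `p : X ⟶ Y`, with
`q : K ⟶ I`. Clots are stable under pullback (pull the reflexive relation back along `p × p`)
and under intersection (intersect the relations), so `k ∩ p⁻¹(L)` is a clot on `X`.
The comparison map `k ∩ p⁻¹(L) ⟶ I ∩ L` is the pullback of `q` along `I ∩ L ⟶ I`, hence a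
regular epimorphism, exhibiting `I ∩ L` as the regular image of that clot.
-/

open CategoryTheory CategoryTheory.Limits

universe v u

variable {C : Type u} [Category.{v} C]

section Clots

variable [HasZeroMorphisms C]

lemma isClot_iff [HasBinaryProducts C] {K X : C} (k : K ⟶ X) :
    IsClot k ↔ Mono k ∧ ∃ (R : C) (ρ : R ⟶ X ⨯ X) (e : X ⟶ R) (z : K ⟶ R),
      Mono ρ ∧ e ≫ ρ = diag X ∧ IsPullback z k ρ (prod.lift 0 (𝟙 X)) := by
  refine and_congr_right fun _ => ⟨?_, ?_⟩
  · rintro ⟨R, d, c, e, hρ, hd, hc, z, hz⟩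
    exact ⟨R, prod.lift d c, e, z, hρ, by ext <;> simp [hd, hc], hz⟩
  · rintro ⟨R, ρ, e, z, hρ, he, hz⟩
    have hρ_eq : prod.lift (ρ ≫ prod.fst) (ρ ≫ prod.snd) = ρ :=
      prod.hom_ext (prod.lift_fst _ _) (prod.lift_snd _ _)
    refine ⟨R, ρ ≫ prod.fst, ρ ≫ prod.snd, e, by rwa [hρ_eq], ?_, ?_, z, by rwa [hρ_eq]⟩
    · rw [reassoc_of% he, prod.lift_fst]
    · rw [reassoc_of% he, prod.lift_snd]

variable [HasFiniteLimits C]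

lemma IsClot.of_isPullback {L Y X M : C} {l : L ⟶ Y} {p : X ⟶ Y} {mL : M ⟶ L} {m : M ⟶ X}
    (hm : IsPullback mL m l p) (hl : IsClot l) : IsClot m := by
  obtain ⟨hl_mono, R, ρ, e, z, hρ, he, hz⟩ := (isClot_iff l).1 hl
  have hR := IsPullback.of_hasPullback ρ (prod.map p p)
  have hzero : prod.lift (0 : X ⟶ X) (𝟙 X) ≫ prod.map p p = p ≫ prod.lift 0 (𝟙 Y) := by
    ext <;> simp
  have hzm : IsPullback (mL ≫ z) m ρ (prod.lift 0 (𝟙 X) ≫ prod.map p p) :=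
    hzero ▸ hm.paste_horiz hz
  refine (isClot_iff m).2 ⟨hm.mono_snd_of_mono hl_mono, _, pullback.snd ρ (prod.map p p),
    pullback.lift (p ≫ e) (diag X) (by simp [he]), _, hR.mono_snd_of_mono hρ,
    pullback.lift_snd _ _ _, hzm.of_right' hR⟩

lemma IsClot.inter {K M X N : C} {k : K ⟶ X} {m : M ⟶ X} {nK : N ⟶ K} {nM : N ⟶ M}
    (hN : IsPullback nK nM k m) (hk : IsClot k) (hm : IsClot m) : IsClot (nK ≫ k) := by
  obtain ⟨hk_mono, R₁, ρ₁, e₁, z₁, hρ₁, he₁, hz₁⟩ := (isClot_iff k).1 hk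
  obtain ⟨hm_mono, R₂, ρ₂, e₂, z₂, hρ₂, he₂, hz₂⟩ := (isClot_iff m).1 hm
  have hR := IsPullback.of_hasPullback ρ₁ ρ₂
  have hz : IsPullback (nM ≫ z₂) nK ρ₂ (z₁ ≫ ρ₁) := hz₁.w ▸ hN.flip.paste_horiz hz₂
  have : Mono nK := hN.mono_fst_of_mono hm_mono
  have : Mono (pullback.fst ρ₁ ρ₂) := hR.mono_fst_of_mono hρ₂
  refine (isClot_iff _).2 ⟨mono_comp _ _, _, pullback.fst ρ₁ ρ₂ ≫ ρ₁,
    pullback.lift e₁ e₂ (he₁.trans he₂.symm), _, mono_comp _ _,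
    by rw [pullback.lift_fst_assoc, he₁],
    (hz.of_right' hR.flip).paste_vert hz₁⟩

end Clots

theorem isIdeal_intersection_clot_general {C : Type u} [Category.{v} C]
    [HasZeroMorphisms C] [RegularCategory C]
    {I L Y P : C} (i : I ⟶ Y) (l : L ⟶ Y) (a : P ⟶ I) (b : P ⟶ L)
    (h : IsPullback a b i l) (hi : IsIdeal i) (hl : IsClot l) :
    IsIdeal (a ≫ i) := by
  obtain ⟨hi_mono, K, X, k, p, q, hk, hp, hq, hqi⟩ := hi
  have hM := IsPullback.of_hasPullback l p
  have hN := IsPullback.of_hasPullback k (pullback.snd l p)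
  have hr : IsPullback _ (pullback.fst k _) a q :=
    (hqi ▸ hN.flip.paste_horiz hM).of_right' h.flip
  have : Mono a := h.mono_fst_of_mono hl.1
  refine ⟨mono_comp _ _, _, X, _, p, _, hk.inter hN (hl.of_isPullback hM), hp,
    RegularCategory.regularEpiStable q a _ _ hr.flip hq, ?_⟩
  rw [reassoc_of% hr.w, hqi, Category.assoc]

/-- In a pointed regular category, an intersection of an ideal and a clot is an ideal:
if `i : I ⟶ Y` is an ideal and `l : L ⟶ Y` is a clot, then the subobject `I ∩ L → Y`,
obtained as (the diagonal of) the pullback of `i` and `l`, is an ideal. -/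
theorem isIdeal_intersection_clot {C : Type u} [Category.{v} C]
    [HasZeroObject C] [HasZeroMorphisms C] [RegularCategory C]
    {I L Y P : C} (i : I ⟶ Y) (l : L ⟶ Y) (a : P ⟶ I) (b : P ⟶ L)
    (h : IsPullback a b i l) (hi : IsIdeal i) (hl : IsClot l) :
    IsIdeal (a ≫ i) :=
  isIdeal_intersection_clot_general i l a b h hi hl
end

section
/- In a pointed regular category, let (d : R → X, c : R → Y) be a surjective relation with zero-class i : I → Y, and let (d' : T → R, c' : T → R) be the relation on R obtained by pulling back ⟨d,c⟩ : R → X×Y along d×c : R×R → X×Y. Then (d',c') is a reflexive relation on R (there exists e' : R → T with d'∘e' = 1_R = c'∘e', induced by the diagonal ⟨1_R,1_R⟩ : R → R×R), and i is the regular image along c of the zero-class k : K → R of (d',c'): there is a regular epimorphism q : K → I with i∘q = c∘k. -/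
open CategoryTheory CategoryTheory.Limits

universe v u

variable {C : Type u} [Category.{v} C]

lemma prod_lift_zero_id_comp_map [HasZeroMorphisms C] [HasBinaryProducts C] {R X Y : C}
    (d : R ⟶ X) (c : R ⟶ Y) :
    prod.lift (0 : R ⟶ R) (𝟙 R) ≫ prod.map d c = c ≫ prod.lift (0 : Y ⟶ X) (𝟙 Y) := by
  ext <;> simp

lemma prod_lift_comp_fst_comp_snd [HasBinaryProducts C] {T A B : C} (p : T ⟶ A ⨯ B) :
    prod.lift (p ≫ prod.fst) (p ≫ prod.snd) = p := by
  rw [← prod.comp_lift, prod.lift_fst_snd, Category.comp_id]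

/-- Pasting `hk` with `hT` makes `k` the pullback of `⟨d, c⟩` along
`⟨0, 1⟩ ≫ (d × c) = c ≫ ⟨0, 1⟩`; cancelling the zero-class square `hi` from it leaves a pullback
of `i` along `c`. -/
lemma exists_isPullback_zeroClass_of_pullback_relation [HasZeroMorphisms C] [HasBinaryProducts C]
    {R X Y I T K : C} {d : R ⟶ X} {c : R ⟶ Y} {l : I ⟶ R} {i : I ⟶ Y} {t : T ⟶ R}
    {pT : T ⟶ R ⨯ R} {m : K ⟶ T} {k : K ⟶ R}
    (hi : IsPullback l i (prod.lift d c) (prod.lift (0 : Y ⟶ X) (𝟙 Y)))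
    (hT : IsPullback t pT (prod.lift d c) (prod.map d c))
    (hk : IsPullback m k pT (prod.lift (0 : R ⟶ R) (𝟙 R))) :
    ∃ q : K ⟶ I, IsPullback q k i c := by
  have hK := hk.paste_horiz hT
  rw [prod_lift_zero_id_comp_map] at hK
  exact ⟨_, hK.of_right' hi⟩

theorem zeroClass_surjective_relation_is_image_of_clot_general {C : Type u} [Category.{v} C]
    [HasZeroMorphisms C] [RegularCategory C]
    {R X Y I T K : C} (d : R ⟶ X) (c : R ⟶ Y)
    (hrel : Mono (prod.lift d c)) (hc : RegularEpi c)
    (l : I ⟶ R) (i : I ⟶ Y)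
    (hi : IsPullback l i (prod.lift d c) (prod.lift (0 : Y ⟶ X) (𝟙 Y)))
    (t : T ⟶ R) (pT : T ⟶ R ⨯ R)
    (hT : IsPullback t pT (prod.lift d c) (prod.map d c))
    (m : K ⟶ T) (k : K ⟶ R)
    (hk : IsPullback m k (prod.lift (pT ≫ prod.fst) (pT ≫ prod.snd))
      (prod.lift (0 : R ⟶ R) (𝟙 R))) :
    Mono (prod.lift (pT ≫ prod.fst) (pT ≫ prod.snd)) ∧
    (∃ e' : R ⟶ T, e' ≫ pT = prod.lift (𝟙 R) (𝟙 R) ∧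
      e' ≫ pT ≫ prod.fst = 𝟙 R ∧ e' ≫ pT ≫ prod.snd = 𝟙 R) ∧
    ∃ q : K ⟶ I, Nonempty (RegularEpi q) ∧ q ≫ i = k ≫ c := by
  rw [prod_lift_comp_fst_comp_snd] at hk ⊢
  refine ⟨hT.mono_snd_of_mono hrel, ?reflexive, ?image⟩
  case reflexive =>
    have hdiag : 𝟙 R ≫ prod.lift d c = prod.lift (𝟙 R) (𝟙 R) ≫ prod.map d c := by simp
    refine ⟨hT.lift _ _ hdiag, hT.lift_snd _ _ _, ?_, ?_⟩
    · rw [hT.lift_snd_assoc, prod.lift_fst]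
    · rw [hT.lift_snd_assoc, prod.lift_snd]
  case image =>
    obtain ⟨q, hq⟩ := exists_isPullback_zeroClass_of_pullback_relation hi hT hk
    exact ⟨q, RegularCategory.regularEpiStable c i k q hq.flip ⟨hc⟩, hq.w⟩

/-- In a pointed regular category, let `(d : R ⟶ X, c : R ⟶ Y)` be a surjective relation
with zero-class `i : I ⟶ Y`, and let `(d', c') = (pT ≫ fst, pT ≫ snd)` be the relation on
`R` obtained by pulling back `⟨d,c⟩ : R ⟶ X ⨯ Y` along `d × c : R ⨯ R ⟶ X ⨯ Y`.  Then
`(d', c')` is a reflexive relation on `R` (reflexivity `e'` being induced by the diagonal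
`⟨1_R,1_R⟩`), and `i` is the regular image along `c` of the zero-class `k : K ⟶ R` of
`(d', c')`: there is a regular epimorphism `q : K ⟶ I` with `i ∘ q = c ∘ k`. -/
theorem zeroClass_surjective_relation_is_image_of_clot {C : Type u} [Category.{v} C]
    [HasZeroObject C] [HasZeroMorphisms C] [RegularCategory C]
    {R X Y I T K : C} (d : R ⟶ X) (c : R ⟶ Y)
    (hrel : Mono (prod.lift d c)) (hc : RegularEpi c)
    (l : I ⟶ R) (i : I ⟶ Y)
    (hi : IsPullback l i (prod.lift d c) (prod.lift (0 : Y ⟶ X) (𝟙 Y)))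
    (t : T ⟶ R) (pT : T ⟶ R ⨯ R)
    (hT : IsPullback t pT (prod.lift d c) (prod.map d c))
    (m : K ⟶ T) (k : K ⟶ R)
    (hk : IsPullback m k (prod.lift (pT ≫ prod.fst) (pT ≫ prod.snd))
      (prod.lift (0 : R ⟶ R) (𝟙 R))) :
    Mono (prod.lift (pT ≫ prod.fst) (pT ≫ prod.snd)) ∧
    (∃ e' : R ⟶ T, e' ≫ pT = prod.lift (𝟙 R) (𝟙 R) ∧
      e' ≫ pT ≫ prod.fst = 𝟙 R ∧ e' ≫ pT ≫ prod.snd = 𝟙 R) ∧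
    ∃ q : K ⟶ I, Nonempty (RegularEpi q) ∧ q ≫ i = k ≫ c :=
  zeroClass_surjective_relation_is_image_of_clot_general d c hrel hc l i hi t pT hT m k hk
end
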